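/- Let S and A be finite nonempty types. Let π, π' : S → A → ℝ be policies, i.e., for every s ∈ S, π(s,·) and π'(s,·) are nonnegative and sum to 1 over A, and assume π(s,a) > 0 for all s,a. Let P : S → A → S → ℝ be a transition function, i.e., for every s,a, P(s,a,·) is nonnegative and sums to 1 over S. Define K(s,s') = Σ_{a∈A} π(s,a)·P(s,a,s') and K'(s,s') = Σ_{a∈A} π'(s,a)·P(s,a,s'), with c-fold compositions K^c, K'^c. Suppose ε ∈ [0,1] and the Kullback–Leibler divergence satisfies Σ_{a∈A} π'(s,a)·log(π'(s,a)/π(s,a)) ≤ 2ε² for every s ∈ S (with the convention 0·log(0/x) = 0). Then for every c ≥ 1 and all s, s' ∈ S, |K'^c(s,s') − K^c(s,s')| ≤ 2εc. -/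

import Mathlib

/-!
Pinsker's inequality comes from the pointwise bound `3 (x - 1)² ≤ (2x + 4) klFun x` for
`x ≥ 0` (the difference is convex with a critical point at `1`): with `x = p/q`, it makes
Cauchy–Schwarz with the weights `2p + 4q`, whose total is `6`, give
`(∑ |p - q|)² ≤ 2 KL(p ‖ q) ≤ (2ε)²`. Mixing the policies with the same `P` can only shrink
row-wise `ℓ¹` distances, so `K' - K` has norm at most `2ε` for the max-row-sum operator norm.
Stochastic matrices have norm at most `1` there, so telescoping
`K'^c - K^c = ∑ K'^i (K' - K) K^(c-1-i)` gives the bound `2εc`.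
-/

open Finset

/-- `kpow K c` is the `c`-fold composition `K^c` of the kernel `K` (for `c ≥ 1`):
`K^1 = K` and `K^{n+1}(s, s'') = ∑ s', K(s, s') * K^n(s', s'')`. -/
noncomputable def kpow {S : Type*} [Fintype S] (K : S → S → ℝ) : ℕ → S → S → ℝ
  | 0 => fun _ _ => 0
  | 1 => K
  | n + 2 => fun s s'' => ∑ s', K s s' * kpow K (n + 1) s' s''

open InformationTheory Set Matrix

attribute [local instance] Matrix.linftyOpSeminormedAddCommGroup Matrix.linftyOpNormedRing

theorem three_mul_sub_one_sq_le_mul_klFun {x : ℝ} (hx : 0 ≤ x) :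
    3 * (x - 1) ^ 2 ≤ (2 * x + 4) * klFun x := by
  set g : ℝ → ℝ := fun y => (2 * y + 4) * klFun y - 3 * (y - 1) ^ 2
  set g' : ℝ → ℝ := fun y => 2 * klFun y + (2 * y + 4) * Real.log y - 6 * (y - 1)
  have hg' {y : ℝ} (hy : y ≠ 0) : HasDerivAt g (g' y) y := by
    refine ((((hasDerivAt_id' y).const_mul 2).add_const 4).mul (hasDerivAt_klFun hy)
      |>.sub ((((hasDerivAt_id' y).sub_const 1).pow 2).const_mul 3)).congr_deriv ?_
    norm_num [g']
    ring
  have hg'' {y : ℝ} (hy : y ≠ 0) : HasDerivAt g' (4 * (Real.log y + y⁻¹ - 1)) y := by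
    refine (((hasDerivAt_klFun hy).const_mul 2).add
      ((((hasDerivAt_id' y).const_mul 2).add_const 4).mul (Real.hasDerivAt_log hy))
      |>.sub (((hasDerivAt_id' y).sub_const 1).const_mul 6)).congr_deriv ?_
    field_simp
    ring
  have hconv : ConvexOn ℝ (Ici 0) g := by
    refine convexOn_of_hasDerivWithinAt2_nonneg (f' := g')
      (f'' := fun y => 4 * (Real.log y + y⁻¹ - 1)) (convex_Ici 0) (by fun_prop) ?_ ?_ ?_ <;>
      rw [interior_Ici]
    · exact fun y hy => (hg' hy.ne').hasDerivWithinAt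
    · exact fun y hy => (hg'' hy.ne').hasDerivWithinAt
    · exact fun y hy => by linarith [Real.one_sub_inv_le_log_of_pos hy]
  have hmin : IsMinOn g (Ici 0) 1 := by
    refine hconv.isMinOn_of_rightDeriv_eq_zero (by simp) ?_
    rw [(hg' one_ne_zero).hasDerivWithinAt.derivWithin (uniqueDiffWithinAt_Ioi 1)]
    simp [g', klFun_one]
  have h1x : g 1 ≤ g x := hmin (mem_Ici.2 hx)
  simp only [g, klFun_one] at h1x
  linarith

theorem sq_sum_abs_sub_le_two_mul_sum_mul_log_div {ι : Type*} [Fintype ι] {p q : ι → ℝ}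
    (hp : ∀ i, 0 ≤ p i) (hq : ∀ i, 0 < q i) (hp1 : ∑ i, p i = 1) (hq1 : ∑ i, q i = 1) :
    (∑ i, |p i - q i|) ^ 2 ≤ 2 * ∑ i, p i * Real.log (p i / q i) := by
  have hkl : ∑ i, q i * klFun (p i / q i) = ∑ i, p i * Real.log (p i / q i) := by
    simp only [klFun_apply, mul_add, mul_sub, ← mul_assoc, mul_div_cancel₀ _ (hq _).ne',
      mul_one, sum_sub_distrib, sum_add_distrib, hp1, hq1, add_sub_cancel_right]
  have hweights : ∑ i, (2 * p i + 4 * q i) = 6 := by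
    rw [sum_add_distrib, ← mul_sum, ← mul_sum, hp1, hq1]
    norm_num
  have hterm (i : ι) :
      |p i - q i| ^ 2 ≤ q i * klFun (p i / q i) / 3 * (2 * p i + 4 * q i) := by
    have hqi := (hq i).ne'
    calc |p i - q i| ^ 2 = q i ^ 2 * (p i / q i - 1) ^ 2 := by rw [sq_abs]; field_simp
      _ ≤ q i ^ 2 * ((2 * (p i / q i) + 4) * klFun (p i / q i) / 3) := by
        gcongr
        linarith [three_mul_sub_one_sq_le_mul_klFun (div_nonneg (hp i) (hq i).le)]
      _ = q i * klFun (p i / q i) / 3 * (2 * p i + 4 * q i) := by field_simp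
  have hcs := sum_sq_le_sum_mul_sum_of_sq_le_mul univ
    (fun i _ => by have := klFun_nonneg (div_nonneg (hp i) (hq i).le); have := hq i; positivity)
    (fun i _ => by have := hp i; have := hq i; positivity) fun i _ => hterm i
  rw [← sum_div, hkl, hweights] at hcs
  linarith

theorem norm_pow_sub_pow_le_of_norm_le_one {R : Type*} [SeminormedRing R] {a b : R}
    (ha : ‖a‖ ≤ 1) (hb : ‖b‖ ≤ 1) {n : ℕ} (hn : n ≠ 0) : ‖a ^ n - b ^ n‖ ≤ n * ‖a - b‖ := by
  obtain ⟨k, rfl⟩ := Nat.exists_eq_succ_of_ne_zero hn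
  clear hn
  induction k with
  | zero => simp
  | succ k ih =>
    have hbk : ‖b ^ (k + 1)‖ ≤ 1 :=
      (norm_pow_le' b k.succ_pos).trans (pow_le_one₀ (norm_nonneg b) hb)
    calc ‖a ^ (k + 2) - b ^ (k + 2)‖
        = ‖a * (a ^ (k + 1) - b ^ (k + 1)) + (a - b) * b ^ (k + 1)‖ := by
          rw [pow_succ' a, pow_succ' b]; noncomm_ring
      _ ≤ ‖a‖ * ‖a ^ (k + 1) - b ^ (k + 1)‖ + ‖a - b‖ * ‖b ^ (k + 1)‖ :=
          (norm_add_le _ _).trans (add_le_add (norm_mul_le _ _) (norm_mul_le _ _))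
      _ ≤ 1 * ((k + 1 : ℕ) * ‖a - b‖) + ‖a - b‖ * 1 := by gcongr
      _ = (k + 2 : ℕ) * ‖a - b‖ := by push_cast; ring

namespace Matrix

variable {m n α : Type*} [Fintype n]

theorem linfty_opNorm_le_iff [SeminormedAddCommGroup α] [Fintype m] {A : Matrix m n α} {r : ℝ}
    (hr : 0 ≤ r) : ‖A‖ ≤ r ↔ ∀ i, ∑ j, ‖A i j‖ ≤ r := by
  lift r to NNReal using hr
  simp_rw [linfty_opNorm_def, NNReal.coe_le_coe, Finset.sup_le_iff, Finset.mem_univ, true_imp_iff,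
    ← NNReal.coe_le_coe, NNReal.coe_sum, coe_nnnorm]

theorem norm_entry_le_linfty_opNorm [SeminormedAddCommGroup α] [Fintype m] (A : Matrix m n α)
    (i : m) (j : n) : ‖A i j‖ ≤ ‖A‖ :=
  (single_le_sum (fun k _ => norm_nonneg (A i k)) (mem_univ j)).trans
    ((linfty_opNorm_le_iff (norm_nonneg A)).1 le_rfl i)

theorem linfty_opNorm_le_one_of_mem_rowStochastic [DecidableEq n] {M : Matrix n n ℝ}
    (hM : M ∈ rowStochastic ℝ n) : ‖M‖ ≤ 1 :=
  (linfty_opNorm_le_iff zero_le_one).2 fun i => by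
    rw [← sum_row_of_mem_rowStochastic hM i]
    exact (sum_congr rfl fun j _ => Real.norm_of_nonneg (nonneg_of_mem_rowStochastic hM)).le

end Matrix

section PolicyKernel

variable {S A : Type*} [Fintype A]

def policyKernel (π : S → A → ℝ) (P : S → A → S → ℝ) : Matrix S S ℝ :=
  Matrix.of fun s s' => ∑ a, π s a * P s a s'

variable {P : S → A → S → ℝ}

theorem policyKernel_mem_rowStochastic [Fintype S] [DecidableEq S] {π : S → A → ℝ}
    (hπ0 : ∀ s a, 0 ≤ π s a) (hπ1 : ∀ s, ∑ a, π s a = 1) (hP0 : ∀ s a s', 0 ≤ P s a s')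
    (hP1 : ∀ s a, ∑ s', P s a s' = 1) :
    policyKernel π P ∈ rowStochastic ℝ S := by
  refine mem_rowStochastic_iff_sum.2 ⟨fun s s' => ?_, fun s => ?_⟩
  · exact sum_nonneg fun a _ => mul_nonneg (hπ0 s a) (hP0 s a s')
  · simp only [policyKernel, of_apply]
    rw [sum_comm]
    simp_rw [← mul_sum, hP1, mul_one, hπ1]

theorem policyKernel_sub (π π' : S → A → ℝ) :
    policyKernel π' P - policyKernel π P = policyKernel (π' - π) P := by
  ext s s'
  simp [policyKernel, sub_mul]

theorem sum_abs_policyKernel_le [Fintype S] (hP0 : ∀ s a s', 0 ≤ P s a s')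
    (hP1 : ∀ s a, ∑ s', P s a s' = 1) (ν : S → A → ℝ) (s : S) :
    ∑ s', |policyKernel ν P s s'| ≤ ∑ a, |ν s a| :=
  calc ∑ s', |policyKernel ν P s s'| ≤ ∑ s', ∑ a, |ν s a| * P s a s' :=
        sum_le_sum fun s' _ => (abs_sum_le_sum_abs _ _).trans_eq <|
          sum_congr rfl fun a _ => by rw [abs_mul, abs_of_nonneg (hP0 s a s')]
    _ = ∑ a, |ν s a| := by
        rw [sum_comm]
        simp_rw [← mul_sum, hP1, mul_one]

end PolicyKernel

theorem kpow_succ_eq_pow {S : Type*} [Fintype S] [DecidableEq S] (M : Matrix S S ℝ) (n : ℕ) :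
    kpow M (n + 1) = M ^ (n + 1) := by
  induction n with
  | zero => rw [zero_add, pow_one]; rfl
  | succ n ih =>
    ext s s''
    rw [pow_succ', Matrix.mul_apply, ← ih]
    rfl

theorem abs_kpow_sub_kpow_le {S : Type*} [Fintype S] [DecidableEq S] {M M' : Matrix S S ℝ}
    (hM : M ∈ rowStochastic ℝ S) (hM' : M' ∈ rowStochastic ℝ S) {n : ℕ} (hn : 0 < n)
    (s s' : S) : |kpow M' n s s' - kpow M n s s'| ≤ n * ‖M' - M‖ := by
  obtain ⟨k, rfl⟩ := Nat.exists_eq_succ_of_ne_zero hn.ne'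
  rw [kpow_succ_eq_pow, kpow_succ_eq_pow]
  exact (norm_entry_le_linfty_opNorm (M' ^ (k + 1) - M ^ (k + 1)) s s').trans
    (norm_pow_sub_pow_le_of_norm_le_one (linfty_opNorm_le_one_of_mem_rowStochastic hM')
      (linfty_opNorm_le_one_of_mem_rowStochastic hM) hn.ne')

theorem abstracted_transition_bound_of_kl_general
    {S A : Type*} [Fintype S] [Fintype A]
    (π π' : S → A → ℝ)
    (hπ_pos : ∀ s a, 0 < π s a) (hπ_sum : ∀ s, ∑ a, π s a = 1)
    (hπ'_nonneg : ∀ s a, 0 ≤ π' s a) (hπ'_sum : ∀ s, ∑ a, π' s a = 1)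
    (P : S → A → S → ℝ)
    (hP_nonneg : ∀ s a s', 0 ≤ P s a s') (hP_sum : ∀ s a, ∑ s', P s a s' = 1)
    (K K' : S → S → ℝ)
    (hK : ∀ s s', K s s' = ∑ a, π s a * P s a s')
    (hK' : ∀ s s', K' s s' = ∑ a, π' s a * P s a s')
    (ε : ℝ) (hε0 : 0 ≤ ε)
    (hKL : ∀ s, ∑ a, π' s a * Real.log (π' s a / π s a) ≤ 2 * ε ^ 2) :
    ∀ c : ℕ, 1 ≤ c → ∀ s s' : S,
      |kpow K' c s s' - kpow K c s s'| ≤ 2 * ε * c := by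
  classical
  obtain rfl : K = policyKernel π P := funext₂ hK
  obtain rfl : K' = policyKernel π' P := funext₂ hK'
  have hTV (s : S) : ∑ a, |π' s a - π s a| ≤ 2 * ε := by
    refine (pow_le_pow_iff_left₀ (sum_nonneg fun a _ => abs_nonneg _) (by positivity)
      two_ne_zero).1 ?_
    calc (∑ a, |π' s a - π s a|) ^ 2 ≤ 2 * ∑ a, π' s a * Real.log (π' s a / π s a) :=
          sq_sum_abs_sub_le_two_mul_sum_mul_log_div (hπ'_nonneg s) (hπ_pos s) (hπ'_sum s)
            (hπ_sum s)
      _ ≤ (2 * ε) ^ 2 := by linarith [hKL s]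
  have hstep : ‖policyKernel π' P - policyKernel π P‖ ≤ 2 * ε := by
    rw [policyKernel_sub, linfty_opNorm_le_iff (by positivity)]
    exact fun s => (sum_abs_policyKernel_le hP_nonneg hP_sum _ s).trans (hTV s)
  intro c hc s s'
  calc |kpow (policyKernel π' P) c s s' - kpow (policyKernel π P) c s s'|
      ≤ c * ‖policyKernel π' P - policyKernel π P‖ :=
        abs_kpow_sub_kpow_le
          (policyKernel_mem_rowStochastic (fun s a => (hπ_pos s a).le) hπ_sum hP_nonneg hP_sum)
          (policyKernel_mem_rowStochastic hπ'_nonneg hπ'_sum hP_nonneg hP_sum) hc s s'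
    _ ≤ 2 * ε * c := by rw [mul_comm]; gcongr

theorem abstracted_transition_bound_of_kl
    {S A : Type*} [Fintype S] [Nonempty S] [Fintype A] [Nonempty A]
    (π π' : S → A → ℝ)
    (hπ_pos : ∀ s a, 0 < π s a) (hπ_sum : ∀ s, ∑ a, π s a = 1)
    (hπ'_nonneg : ∀ s a, 0 ≤ π' s a) (hπ'_sum : ∀ s, ∑ a, π' s a = 1)
    (P : S → A → S → ℝ)
    (hP_nonneg : ∀ s a s', 0 ≤ P s a s') (hP_sum : ∀ s a, ∑ s', P s a s' = 1)
    (K K' : S → S → ℝ)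
    (hK : ∀ s s', K s s' = ∑ a, π s a * P s a s')
    (hK' : ∀ s s', K' s s' = ∑ a, π' s a * P s a s')
    (ε : ℝ) (hε0 : 0 ≤ ε) (hε1 : ε ≤ 1)
    (hKL : ∀ s, ∑ a, π' s a * Real.log (π' s a / π s a) ≤ 2 * ε ^ 2) :
    ∀ c : ℕ, 1 ≤ c → ∀ s s' : S,
      |kpow K' c s s' - kpow K c s s'| ≤ 2 * ε * c :=
  abstracted_transition_bound_of_kl_general π π' hπ_pos hπ_sum hπ'_nonneg hπ'_sum P hP_nonneg hP_sum
    K K' hK hK' ε hε0 hKL
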